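/- arXiv:1802.05177 — 3 statements merged into one kernel-verified Lean document; each statement's English description precedes it below -/
import Mathlib

section
/- Let α, β > -1 be real and let L > 0. For all m, n ∈ ℕ with m ≠ n, the rational Jacobi functions are orthogonal with respect to the weight w_L^{α,β}: ∫₀^∞ J_n^{α,β}((x-L)/(x+L)) · J_m^{α,β}((x-L)/(x+L)) · 2^(α+β+1) x^β L^(α+1)/(x+L)^(α+β+2) dx = 0. -/
/-!
Substituting `x = L u / (1 - u)` turns the integral into `2^(α+β+1)` times
`∫₀¹ J_n(2u-1) J_m(2u-1) u^β (1-u)^α du`, so it suffices, for `m < n`, that `J_n(2u-1)` is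
orthogonal to every `u^k` with `k < n`. Expanding `J_n(2u-1)` in powers of `u - 1` and evaluating
each term as a Beta integral, the `k`-th moment becomes `Γ(β+k+1)` times
`∑ᵢ (-1)^i C(n,i) p(i)` with `p(i) = Γ(n+i+α+β+1) / Γ(k+i+α+β+2)`, a polynomial of degree
`n - k - 1` in `i`. This alternating sum is an `n`-th forward difference of `p`, hence zero.
-/

open MeasureTheory Set

/-- The Jacobi polynomial `J_n^{α,β}` for real parameters `α, β`, defined by
`J_n^{α,β}(x) = (Γ(n+α+1)/(n!·Γ(n+α+β+1))) ·
  ∑_{i=0}^{n} C(n,i) · (Γ(n+i+α+β+1)/Γ(i+α+1)) · ((x-1)/2)^i`,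
where `Γ` is the real Gamma function and `C(n,i)` the binomial coefficient. -/
noncomputable def jacobiP (n : ℕ) (α β x : ℝ) : ℝ :=
  (Real.Gamma (n + α + 1) / (n.factorial * Real.Gamma (n + α + β + 1))) *
    ∑ i ∈ Finset.range (n + 1),
      (n.choose i : ℝ) * (Real.Gamma (n + i + α + β + 1) / Real.Gamma (i + α + 1)) *
        ((x - 1) / 2) ^ i

open Finset Polynomial

theorem Polynomial.alternating_sum_range_choose_mul_eval_eq_zero {R : Type*} [CommRing R]
    (P : R[X]) {n : ℕ} (hP : P.natDegree < n) :
    ∑ k ∈ range (n + 1), (-1 : R) ^ k * n.choose k * P.eval (k : R) = 0 := by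
  have h := congr_arg ((-1 : R) ^ n * ·) (congr_fun (P.fwdDiff_iter_eq_zero_of_degree_lt hP) 0)
  simp only [fwdDiff_iter_eq_sum_shift, Pi.zero_apply, mul_zero, mul_sum] at h
  rw [← h]
  refine sum_congr rfl fun k hk => ?_
  have hkn : n + (n - k) = k + 2 * (n - k) := by have := mem_range.mp hk; omega
  simp [zsmul_eq_mul, ← mul_assoc, ← pow_add, hkn, pow_add _ k, pow_mul]

theorem Real.Gamma_add_nat_div_Gamma {x : ℝ} (hx : 0 < x) (d : ℕ) :
    Real.Gamma (x + d) / Real.Gamma x = (ascPochhammer ℝ d).eval x := by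
  have h := Complex.Gamma_add_nat_div_Gamma_eq (x : ℂ) (n := d) fun k hk => by
    rw [← Complex.ofReal_natCast, ← Complex.ofReal_neg, Complex.ofReal_inj] at hk
    linarith [(Nat.cast_nonneg k : (0 : ℝ) ≤ k)]
  rw [← Complex.ofReal_natCast, ← Complex.ofReal_add, Complex.Gamma_ofReal, Complex.Gamma_ofReal,
    ← Complex.ofReal_div, ← ascPochhammer_map (algebraMap ℝ ℂ), eval_map_algebraMap] at h
  exact Complex.ofReal_injective (h.trans (aeval_algebraMap_apply_eq_algebraMap_eval _ _))

/-- The right-hand side is the integrand of `Complex.betaIntegral (a + 1) (b + 1)`. -/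
lemma ofReal_rpow_mul_one_sub_rpow {a b u : ℝ} (hu : u ∈ Ioo (0 : ℝ) 1) :
    ((u ^ a * (1 - u) ^ b : ℝ) : ℂ) =
      (u : ℂ) ^ ((a + 1 : ℂ) - 1) * (1 - (u : ℂ)) ^ ((b + 1 : ℂ) - 1) := by
  rw [Complex.ofReal_mul, Complex.ofReal_cpow hu.1.le,
    Complex.ofReal_cpow (sub_nonneg.mpr hu.2.le)]
  simp

lemma integrableOn_rpow_mul_one_sub_rpow {a b : ℝ} (ha : -1 < a) (hb : -1 < b) :
    IntegrableOn (fun u : ℝ => u ^ a * (1 - u) ^ b) (Ioo 0 1) := by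
  have h := Complex.betaIntegral_convergent (u := a + 1) (v := b + 1)
    (by simp; linarith) (by simp; linarith)
  rw [intervalIntegrable_iff_integrableOn_Ioc_of_le zero_le_one] at h
  have h' : IntegrableOn (fun u : ℝ => ((u ^ a * (1 - u) ^ b : ℝ) : ℂ)) (Ioo 0 1) :=
    (h.mono_set Ioo_subset_Ioc_self).congr_fun
      (fun u hu => (ofReal_rpow_mul_one_sub_rpow hu).symm) measurableSet_Ioo
  simpa only [IntegrableOn, RCLike.re_to_complex, Complex.ofReal_re] using h'.re

lemma integral_rpow_mul_one_sub_rpow {a b : ℝ} (ha : -1 < a) (hb : -1 < b) :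
    ∫ u in Ioo (0 : ℝ) 1, u ^ a * (1 - u) ^ b =
      Real.Gamma (a + 1) * Real.Gamma (b + 1) / Real.Gamma (a + b + 2) := by
  have h := Complex.betaIntegral_eq_Gamma_mul_div (a + 1) (b + 1) (by simp; linarith)
    (by simp; linarith)
  rw [Complex.betaIntegral, intervalIntegral.integral_of_le zero_le_one,
    integral_Ioc_eq_integral_Ioo, ← setIntegral_congr_fun measurableSet_Ioo
      (fun u hu => ofReal_rpow_mul_one_sub_rpow hu), integral_complex_ofReal] at h
  rw [show (a : ℂ) + 1 + (b + 1) = ((a + b + 2 : ℝ) : ℂ) by push_cast; ring,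
    ← Complex.ofReal_one, ← Complex.ofReal_add, ← Complex.ofReal_add] at h
  simp only [Complex.Gamma_ofReal] at h
  exact_mod_cast h

lemma integral_Ioo_zero_one_eq_integral_Ioi {L : ℝ} (hL : 0 < L) (g : ℝ → ℝ) :
    ∫ u in Ioo (0 : ℝ) 1, g u = ∫ x in Ioi 0, L / (x + L) ^ 2 * g (x / (x + L)) := by
  have himage : (fun x => x / (x + L)) '' Ioi 0 = Ioo (0 : ℝ) 1 := by
    ext u
    constructor
    · rintro ⟨x, hx : 0 < x, rfl⟩
      exact ⟨by positivity, (div_lt_one (by linarith)).mpr (by linarith)⟩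
    · rintro ⟨hu0, hu1⟩
      have hu1' : 1 - u ≠ 0 := (sub_pos.mpr hu1).ne'
      refine ⟨L * u / (1 - u), div_pos (mul_pos hL hu0) (sub_pos.mpr hu1), ?_⟩
      field_simp
      ring
  have hderiv : ∀ x ∈ Ioi (0 : ℝ),
      HasDerivWithinAt (fun x => x / (x + L)) (L / (x + L) ^ 2) (Ioi 0) x := by
    intro x (hx : 0 < x)
    have hxL : x + L ≠ 0 := by linarith
    have h := (hasDerivAt_id' x).div ((hasDerivAt_id' x).add_const L) hxL
    rw [show (1 * (x + L) - x * 1) / (x + L) ^ 2 = L / (x + L) ^ 2 by ring] at h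
    exact h.hasDerivWithinAt
  have hinj : InjOn (fun x : ℝ => x / (x + L)) (Ioi 0) := by
    intro x (hx : 0 < x) y (hy : 0 < y) hxy
    rw [div_eq_div_iff (by linarith) (by linarith)] at hxy
    exact mul_right_cancel₀ hL.ne' (by linear_combination hxy)
  rw [← himage, integral_image_eq_integral_abs_deriv_smul measurableSet_Ioi hderiv hinj]
  refine setIntegral_congr_fun measurableSet_Ioi fun x (hx : 0 < x) => ?_
  have hxL : 0 < x + L := by linarith
  rw [smul_eq_mul, abs_of_pos (div_pos hL (pow_pos hxL 2))]

noncomputable def jacobiCoeff (n : ℕ) (α β : ℝ) (i : ℕ) : ℝ :=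
  Real.Gamma (n + α + 1) / (n.factorial * Real.Gamma (n + α + β + 1)) *
    (n.choose i * (Real.Gamma (n + i + α + β + 1) / Real.Gamma (i + α + 1)))

lemma jacobiP_two_mul_sub_one (n : ℕ) (α β u : ℝ) :
    jacobiP n α β (2 * u - 1) = ∑ i ∈ range (n + 1), jacobiCoeff n α β i * (u - 1) ^ i := by
  rw [jacobiP, show (2 * u - 1 - 1) / 2 = u - 1 by ring, mul_sum]
  exact sum_congr rfl fun i _ => by rw [jacobiCoeff]; ring

lemma continuous_jacobiP (n : ℕ) (α β : ℝ) : Continuous (jacobiP n α β) := by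
  unfold jacobiP
  fun_prop

lemma exists_polynomial_eval_eq_jacobiP_two_mul_sub_one (n : ℕ) (α β : ℝ) :
    ∃ q : ℝ[X], q.natDegree ≤ n ∧ ∀ u, q.eval u = jacobiP n α β (2 * u - 1) := by
  refine ⟨∑ i ∈ range (n + 1), C (jacobiCoeff n α β i) * (X - C 1) ^ i, ?_, fun u => ?_⟩
  · refine natDegree_sum_le_of_forall_le _ _ fun i hi => (natDegree_C_mul_le _ _).trans ?_
    refine natDegree_pow_le.trans ?_
    rw [natDegree_X_sub_C, mul_one]
    exact Nat.lt_succ_iff.mp (mem_range.mp hi)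
  · simp [jacobiP_two_mul_sub_one, eval_finsetSum]

/-- The Jacobi weight `(1 - t)^α (1 + t)^β` on `(-1, 1)`, transported to `(0, 1)` by
`t = 2 u - 1` and divided by `2^(α+β)`. -/
noncomputable def jacobiWeight (α β u : ℝ) : ℝ := u ^ β * (1 - u) ^ α

section JacobiWeight

variable {α β : ℝ}

lemma integrableOn_mul_jacobiWeight (hα : -1 < α) (hβ : -1 < β) {f : ℝ → ℝ}
    (hf : Continuous f) : IntegrableOn (fun u => f u * jacobiWeight α β u) (Ioo 0 1) :=
  (integrableOn_rpow_mul_one_sub_rpow hβ hα).continuousOn_mul_of_subset hf.continuousOn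
    isCompact_Icc measurableSet_Ioo Ioo_subset_Icc_self

lemma integral_sub_one_pow_mul_pow_mul_jacobiWeight (hα : -1 < α) (hβ : -1 < β) (i k : ℕ) :
    ∫ u in Ioo (0 : ℝ) 1, (u - 1) ^ i * u ^ k * jacobiWeight α β u =
      (-1) ^ i * (Real.Gamma (β + k + 1) * Real.Gamma (α + i + 1) /
        Real.Gamma (β + k + (α + i) + 2)) := by
  have hk : -1 < β + k := by linarith [(Nat.cast_nonneg k : (0 : ℝ) ≤ k)]
  have hi : -1 < α + i := by linarith [(Nat.cast_nonneg i : (0 : ℝ) ≤ i)]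
  rw [← integral_rpow_mul_one_sub_rpow hk hi, ← integral_const_mul]
  refine setIntegral_congr_fun measurableSet_Ioo fun u ⟨hu0, hu1⟩ => ?_
  rw [jacobiWeight, Real.rpow_add hu0, Real.rpow_add (sub_pos.mpr hu1), Real.rpow_natCast,
    Real.rpow_natCast, show u - 1 = -(1 - u) by ring, neg_pow]
  ring

lemma integral_jacobiP_mul_pow_mul_jacobiWeight (hα : -1 < α) (hβ : -1 < β) {n k : ℕ}
    (hk : k < n) :
    ∫ u in Ioo (0 : ℝ) 1, jacobiP n α β (2 * u - 1) * u ^ k * jacobiWeight α β u = 0 := by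
  set p : ℝ[X] := (ascPochhammer ℝ (n - (k + 1))).comp (X + C (α + β + k + 2))
  have hp : p.natDegree < n := by
    rw [natDegree_comp, ascPochhammer_natDegree, natDegree_X_add_C]
    omega
  have hterm : ∀ i : ℕ, jacobiCoeff n α β i *
      ∫ u in Ioo (0 : ℝ) 1, (u - 1) ^ i * u ^ k * jacobiWeight α β u =
        Real.Gamma (n + α + 1) / (n.factorial * Real.Gamma (n + α + β + 1)) *
          Real.Gamma (β + k + 1) * ((-1) ^ i * n.choose i * p.eval (i : ℝ)) := by
    intro i
    have hy : 0 < β + k + (α + i) + 2 := by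
      linarith [(Nat.cast_nonneg k : (0 : ℝ) ≤ k), (Nat.cast_nonneg i : (0 : ℝ) ≤ i)]
    have hΓ : Real.Gamma (n + i + α + β + 1) / Real.Gamma (β + k + (α + i) + 2) =
        p.eval (i : ℝ) := by
      rw [show (n : ℝ) + i + α + β + 1 = β + k + (α + i) + 2 + (n - (k + 1) : ℕ) by
        push_cast [Nat.cast_sub hk]; ring, Real.Gamma_add_nat_div_Gamma hy]
      simp only [p, eval_comp, eval_add, eval_X, eval_C]
      ring_nf
    have hi : Real.Gamma (i + α + 1) ≠ 0 :=
      (Real.Gamma_pos_of_pos (by linarith [(Nat.cast_nonneg i : (0 : ℝ) ≤ i)])).ne'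
    rw [integral_sub_one_pow_mul_pow_mul_jacobiWeight hα hβ, ← hΓ,
      show α + i + 1 = i + α + 1 by ring, jacobiCoeff]
    field_simp
  simp_rw [jacobiP_two_mul_sub_one, sum_mul]
  rw [integral_finsetSum _ fun i _ => by
    simpa only [mul_assoc] using (integrableOn_mul_jacobiWeight hα hβ
      (f := fun u => (u - 1) ^ i * u ^ k) (by fun_prop)).const_mul (jacobiCoeff n α β i)]
  simp_rw [mul_assoc, integral_const_mul, ← mul_assoc, hterm, ← mul_sum,
    p.alternating_sum_range_choose_mul_eval_eq_zero hp, mul_zero]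

lemma integral_jacobiP_mul_eval_mul_jacobiWeight (hα : -1 < α) (hβ : -1 < β) {n : ℕ}
    (q : ℝ[X]) (hq : q.natDegree < n) :
    ∫ u in Ioo (0 : ℝ) 1, jacobiP n α β (2 * u - 1) * q.eval u * jacobiWeight α β u = 0 := by
  simp_rw [q.eval_eq_sum_range' hq, mul_sum, sum_mul]
  have hP : Continuous fun u : ℝ => jacobiP n α β (2 * u - 1) :=
    (continuous_jacobiP n α β).comp (by fun_prop)
  rw [integral_finsetSum _ fun k _ => integrableOn_mul_jacobiWeight hα hβ (by fun_prop)]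
  refine sum_eq_zero fun k hk => ?_
  calc ∫ u in Ioo (0 : ℝ) 1, jacobiP n α β (2 * u - 1) * (q.coeff k * u ^ k) * jacobiWeight α β u
      = q.coeff k * ∫ u in Ioo (0 : ℝ) 1,
          jacobiP n α β (2 * u - 1) * u ^ k * jacobiWeight α β u := by
        rw [← integral_const_mul]
        congr 1 with u
        ring
    _ = 0 := by rw [integral_jacobiP_mul_pow_mul_jacobiWeight hα hβ (mem_range.mp hk), mul_zero]

lemma integral_jacobiP_mul_jacobiP_mul_jacobiWeight (hα : -1 < α) (hβ : -1 < β) {m n : ℕ}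
    (hmn : m ≠ n) :
    ∫ u in Ioo (0 : ℝ) 1,
      jacobiP n α β (2 * u - 1) * jacobiP m α β (2 * u - 1) * jacobiWeight α β u = 0 := by
  wlog h : m < n generalizing m n
  · simpa only [mul_comm (jacobiP m α β _) (jacobiP n α β _)] using
      this hmn.symm (hmn.lt_or_gt.resolve_left h)
  obtain ⟨q, hq, hqe⟩ := exists_polynomial_eval_eq_jacobiP_two_mul_sub_one m α β
  simp_rw [← hqe]
  exact integral_jacobiP_mul_eval_mul_jacobiWeight hα hβ q (hq.trans_lt h)

lemma mul_jacobiWeight_div_add {x L : ℝ} (hx : 0 < x) (hL : 0 < L) :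
    L / (x + L) ^ 2 * jacobiWeight α β (x / (x + L)) =
      x ^ β * L ^ (α + 1) / (x + L) ^ (α + β + 2) := by
  have hxL : 0 < x + L := by linarith
  rw [jacobiWeight, show 1 - x / (x + L) = L / (x + L) by field_simp; ring,
    Real.div_rpow hx.le hxL.le, Real.div_rpow hL.le hxL.le, Real.rpow_add hxL,
    Real.rpow_add hxL, Real.rpow_add hL, Real.rpow_one, Real.rpow_two]
  field_simp

end JacobiWeight

/-- For real `α, β > -1`, `L > 0` and `m ≠ n`, the rational Jacobi
functions are orthogonal with respect to the weight
`w_L^{α,β}(x) = 2^(α+β+1) x^β L^(α+1)/(x+L)^(α+β+2)` on `(0,∞)`: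
their weighted product integrates to zero. -/
theorem rationalJacobi_orthogonal (α β L : ℝ) (hα : -1 < α) (hβ : -1 < β) (hL : 0 < L)
    (m n : ℕ) (hmn : m ≠ n) :
    ∫ x in Ioi (0 : ℝ),
        jacobiP n α β ((x - L) / (x + L)) * jacobiP m α β ((x - L) / (x + L)) *
          (2 ^ (α + β + 1) * x ^ β * L ^ (α + 1) / (x + L) ^ (α + β + 2)) = 0 := by
  have h := integral_Ioo_zero_one_eq_integral_Ioi hL fun u =>
    jacobiP n α β (2 * u - 1) * jacobiP m α β (2 * u - 1) * jacobiWeight α β u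
  rw [integral_jacobiP_mul_jacobiP_mul_jacobiWeight hα hβ hmn] at h
  calc _ = ∫ x in Ioi (0 : ℝ), 2 ^ (α + β + 1) * (L / (x + L) ^ 2 *
        (jacobiP n α β (2 * (x / (x + L)) - 1) * jacobiP m α β (2 * (x / (x + L)) - 1) *
          jacobiWeight α β (x / (x + L)))) := by
        refine setIntegral_congr_fun measurableSet_Ioi fun x (hx : 0 < x) => ?_
        have hxL : x + L ≠ 0 := by linarith
        rw [show 2 * (x / (x + L)) - 1 = (x - L) / (x + L) by field_simp; ring]
        linear_combination (-2 ^ (α + β + 1) * jacobiP n α β ((x - L) / (x + L)) *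
          jacobiP m α β ((x - L) / (x + L))) * mul_jacobiWeight_div_add (α := α) (β := β) hx hL
    _ = 0 := by rw [integral_const_mul, ← h, mul_zero]
end

section
/- Let α, β > -1 be real, L > 0, N ∈ ℕ, and let a_0, …, a_N be real coefficients. Define f : ℝ → ℝ by f(x) = x/(x²+1) + (x²/(x²+1)) · ∑_{j=0}^{N} a_j · J_j^{α,β}((x-L)/(x+L)). Then the trial function satisfies all three boundary conditions of the Eyring–Powell boundary layer problem: f(0) = 0, f'(0) = 1 (f has derivative 1 at x = 0), and the derivative f'(x) tends to 0 as x → +∞. -/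
open Filter

/-!
Only the smoothness of `g(y) = ∑ a_j J_j^{α,β}(y)` matters. At `x = 0` the factor
`x²/(x²+1)` vanishes to second order, so `f(0) = 0` and `f'(0) = 1` come from `x/(x²+1)` alone.
For large `x`, `f'(x) = A(x) + B(x) g(u) + C(x) g'(u)` with `u = (x-L)/(x+L) → 1` and rational
coefficients `A, B, C` whose numerators have lower degree than their denominators.
-/

open Polynomial Topology

theorem contDiff_jacobiP (n : ℕ) (α β : ℝ) {k : WithTop ℕ∞} :
    ContDiff ℝ k (jacobiP n α β) := by
  unfold jacobiP
  fun_prop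

theorem tendsto_div_eval_atTop_zero {P Q : ℝ[X]} {m n : ℕ} (hP : P.degree ≤ m)
    (hQ : Q.degree = n) (hmn : m < n) :
    Tendsto (fun x => P.eval x / Q.eval x) atTop (𝓝 0) :=
  div_tendsto_atTop_zero_of_degree_lt P Q (hP.trans_lt (hQ ▸ WithBot.coe_lt_coe.mpr hmn))

theorem tendsto_sub_div_add_atTop (L : ℝ) : Tendsto (fun x => (x - L) / (x + L)) atTop (𝓝 1) := by
  have h := div_tendsto_atTop_leadingCoeff_div_of_degree_eq (X - C L) (X + C L)
    (by rw [degree_X_sub_C, degree_X_add_C])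
  simpa [leadingCoeff_X_sub_C, leadingCoeff_X_add_C] using h

section TrialFunction

variable (L : ℝ) (g : ℝ → ℝ)

noncomputable def trialFunction (x : ℝ) : ℝ :=
  x / (x ^ 2 + 1) + x ^ 2 / (x ^ 2 + 1) * g ((x - L) / (x + L))

theorem trialFunction_zero : trialFunction L g 0 = 0 := by
  simp [trialFunction]

variable {L g}

theorem hasDerivAt_trialFunction {x g' : ℝ} (hx : x + L ≠ 0)
    (hg : HasDerivAt g g' ((x - L) / (x + L))) :
    HasDerivAt (trialFunction L g)
      ((1 - x ^ 2) / (x ^ 2 + 1) ^ 2 + 2 * x / (x ^ 2 + 1) ^ 2 * g ((x - L) / (x + L)) +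
        2 * L * x ^ 2 / ((x ^ 2 + 1) * (x + L) ^ 2) * g') x := by
  have hq : x ^ 2 + 1 ≠ 0 := by positivity
  have hu : HasDerivAt (fun x : ℝ => (x - L) / (x + L))
      ((1 * (x + L) - (x - L) * 1) / (x + L) ^ 2) x :=
    ((hasDerivAt_id x).sub_const L).div ((hasDerivAt_id x).add_const L) hx
  apply HasDerivAt.congr_deriv
  · exact ((hasDerivAt_id x).div ((hasDerivAt_pow 2 x).add_const 1) hq).add
      (((hasDerivAt_pow 2 x).div ((hasDerivAt_pow 2 x).add_const 1) hq).mul (hg.comp x hu))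
  · simp only [id, Pi.div_apply]
    field_simp
    ring

theorem hasDerivAt_trialFunction_zero (hL : L ≠ 0) (hg : DifferentiableAt ℝ g (-1)) :
    HasDerivAt (trialFunction L g) 1 0 := by
  have hg' : HasDerivAt g (deriv g (-1)) ((0 - L) / (0 + L)) := by
    rw [zero_sub, zero_add, neg_div, div_self hL]
    exact hg.hasDerivAt
  simpa using hasDerivAt_trialFunction (by simpa using hL) hg'

theorem tendsto_deriv_trialFunction_atTop (hg : ContDiff ℝ 1 g) :
    Tendsto (deriv (trialFunction L g)) atTop (𝓝 0) := by
  have hA : Tendsto (fun x : ℝ => (1 - x ^ 2) / (x ^ 2 + 1) ^ 2) atTop (𝓝 0) :=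
    (tendsto_div_eval_atTop_zero (P := 1 - X ^ 2) (Q := (X ^ 2 + 1) ^ 2) (m := 2) (n := 4)
      (by compute_degree!) (by compute_degree!) (by norm_num)).congr fun x => by simp
  have hB : Tendsto (fun x : ℝ => 2 * x / (x ^ 2 + 1) ^ 2) atTop (𝓝 0) :=
    (tendsto_div_eval_atTop_zero (P := 2 * X) (Q := (X ^ 2 + 1) ^ 2) (m := 1) (n := 4)
      (by compute_degree!) (by compute_degree!) (by norm_num)).congr fun x => by simp
  have hC : Tendsto (fun x : ℝ => 2 * L * x ^ 2 / ((x ^ 2 + 1) * (x + L) ^ 2)) atTop (𝓝 0) :=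
    (tendsto_div_eval_atTop_zero (P := C (2 * L) * X ^ 2) (Q := (X ^ 2 + 1) * (X + C L) ^ 2)
      (m := 2) (n := 4) (by compute_degree!) (by compute_degree!) (by norm_num)).congr
      fun x => by simp
  have hgu := (hg.continuous.tendsto 1).comp (tendsto_sub_div_add_atTop L)
  have hg'u := ((hg.continuous_deriv le_rfl).tendsto 1).comp (tendsto_sub_div_add_atTop L)
  have hderiv : (fun x => (1 - x ^ 2) / (x ^ 2 + 1) ^ 2 +
      2 * x / (x ^ 2 + 1) ^ 2 * g ((x - L) / (x + L)) +
      2 * L * x ^ 2 / ((x ^ 2 + 1) * (x + L) ^ 2) * deriv g ((x - L) / (x + L))) =ᶠ[atTop]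
      deriv (trialFunction L g) := by
    filter_upwards [eventually_gt_atTop (-L)] with x hx
    exact ((hasDerivAt_trialFunction (by linarith)
      (hg.differentiable one_ne_zero _).hasDerivAt).deriv).symm
  simpa using ((hA.add (hB.mul hgu)).add (hC.mul hg'u)).congr' hderiv

end TrialFunction

theorem trial_function_boundary_conditions_general (α β L : ℝ)
    (hL : 0 < L) (N : ℕ) (a : ℕ → ℝ) :
    let f : ℝ → ℝ := fun x =>
      x / (x ^ 2 + 1) + (x ^ 2 / (x ^ 2 + 1)) *
        ∑ j ∈ Finset.range (N + 1), a j * jacobiP j α β ((x - L) / (x + L))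
    f 0 = 0 ∧ HasDerivAt f 1 0 ∧ Tendsto (fun x => deriv f x) atTop (nhds 0) := by
  intro f
  let S (y : ℝ) : ℝ := ∑ j ∈ Finset.range (N + 1), a j * jacobiP j α β y
  have hS : ContDiff ℝ 1 S := ContDiff.sum fun j _ => contDiff_const.mul (contDiff_jacobiP j α β)
  change trialFunction L S 0 = 0 ∧ HasDerivAt (trialFunction L S) 1 0 ∧
    Tendsto (deriv (trialFunction L S)) atTop (𝓝 0)
  exact ⟨trialFunction_zero L S, hasDerivAt_trialFunction_zero hL.ne'
    (hS.differentiable one_ne_zero _), tendsto_deriv_trialFunction_atTop hS⟩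

/-- For real `α, β > -1`, `L > 0`, `N ∈ ℕ` and real coefficients
`a 0, …, a N`, the trial function
`f(x) = x/(x²+1) + (x²/(x²+1)) · ∑_{j=0}^{N} a j · J_j^{α,β}((x-L)/(x+L))`
satisfies the three boundary conditions of the Eyring–Powell boundary layer problem:
`f(0) = 0`, `f` has derivative `1` at `x = 0`, and `f'(x) → 0` as `x → +∞`. -/
theorem trial_function_boundary_conditions (α β L : ℝ) (hα : -1 < α) (hβ : -1 < β)
    (hL : 0 < L) (N : ℕ) (a : ℕ → ℝ) :
    let f : ℝ → ℝ := fun x =>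
      x / (x ^ 2 + 1) + (x ^ 2 / (x ^ 2 + 1)) *
        ∑ j ∈ Finset.range (N + 1), a j * jacobiP j α β ((x - L) / (x + L))
    f 0 = 0 ∧ HasDerivAt f 1 0 ∧ Tendsto (fun x => deriv f x) atTop (nhds 0) :=
  trial_function_boundary_conditions_general α β L hL N a
end

section
/- For every real t with |t| ≤ 1, the cubic Taylor approximation of the inverse hyperbolic sine satisfies |arsinh(t) - (t - t³/6)| ≤ (3/40)·|t|⁵. -/
/-!
For `R(t) = arsinh t - (t - t³/6)` we have `R'(t) = (1 + t²)^(-1/2) - (1 - t²/2)`, and the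
alternating binomial series gives `0 ≤ R'(t) ≤ 3t⁴/8` for every real `t`. Hence `R` and
`3t⁵/40 - R` are monotone and vanish at `0`, so `R(t)` lies between `0` and `3t⁵/40`.
-/

open Real Set

lemma one_sub_sq_div_two_le_inv_sqrt_one_add_sq (x : ℝ) :
    1 - x ^ 2 / 2 ≤ (√(1 + x ^ 2))⁻¹ := by
  rcases le_total 2 (x ^ 2) with hx | hx
  · have : 0 < (√(1 + x ^ 2))⁻¹ := by positivity
    linarith
  · -- `(1 - x²/2)² (1 + x²) = 1 - x⁴ (3 - x²) / 4`, so squaring works only for `x² ≤ 3`.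
    rw [← sqrt_inv]
    refine (le_abs_self _).trans (abs_le_sqrt ?_)
    rw [← one_div, le_div_iff₀ (by positivity)]
    nlinarith [mul_nonneg (pow_two_nonneg (x ^ 2)) (sub_nonneg.2 hx)]

lemma inv_sqrt_one_add_sq_le (x : ℝ) :
    (√(1 + x ^ 2))⁻¹ ≤ 1 - x ^ 2 / 2 + 3 / 8 * x ^ 4 := by
  rw [← sqrt_inv, sqrt_le_iff]
  constructor
  · nlinarith [sq_nonneg (x ^ 2 - 2 / 3)]
  · -- With `u = x²`: `(1 - u/2 + 3u²/8)² (1 + u) - 1 = u³ (9u² - 15u + 40) / 64`.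
    rw [inv_le_iff_one_le_mul₀ (by positivity)]
    nlinarith [pow_nonneg (sq_nonneg x) 3,
      mul_nonneg (pow_nonneg (sq_nonneg x) 3) (sq_nonneg (3 * x ^ 2 - 5 / 2))]

lemma hasDerivAt_arsinh_sub_cubic (x : ℝ) :
    HasDerivAt (fun y => arsinh y - (y - y ^ 3 / 6)) ((√(1 + x ^ 2))⁻¹ - (1 - x ^ 2 / 2)) x := by
  have hcubic : HasDerivAt (fun y : ℝ => y - y ^ 3 / 6) (1 - x ^ 2 / 2) x :=
    ((hasDerivAt_id' x).sub ((hasDerivAt_pow 3 x).div_const 6)).congr_deriv (by norm_num; ring)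
  exact (hasDerivAt_arsinh x).sub hcubic

lemma monotone_arsinh_sub_cubic : Monotone fun y : ℝ => arsinh y - (y - y ^ 3 / 6) :=
  monotone_of_hasDerivAt_nonneg hasDerivAt_arsinh_sub_cubic fun x =>
    sub_nonneg.2 (one_sub_sq_div_two_le_inv_sqrt_one_add_sq x)

lemma monotone_quintic_sub_arsinh_sub_cubic :
    Monotone fun y : ℝ => 3 / 40 * y ^ 5 - (arsinh y - (y - y ^ 3 / 6)) := by
  have hderiv (x : ℝ) : HasDerivAt (fun y : ℝ => 3 / 40 * y ^ 5 - (arsinh y - (y - y ^ 3 / 6)))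
      (3 / 8 * x ^ 4 - ((√(1 + x ^ 2))⁻¹ - (1 - x ^ 2 / 2))) x :=
    (((hasDerivAt_pow 5 x).const_mul (3 / 40 : ℝ)).sub (hasDerivAt_arsinh_sub_cubic x)).congr_deriv
      (by norm_num; ring)
  refine monotone_of_hasDerivAt_nonneg hderiv fun x => ?_
  change 0 ≤ 3 / 8 * x ^ 4 - ((√(1 + x ^ 2))⁻¹ - (1 - x ^ 2 / 2))
  linarith [inv_sqrt_one_add_sq_le x]

lemma arsinh_sub_cubic_mem_uIcc (t : ℝ) :
    arsinh t - (t - t ^ 3 / 6) ∈ uIcc 0 (3 / 40 * t ^ 5) := by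
  rcases le_total 0 t with ht | ht
  · have hlower := monotone_arsinh_sub_cubic ht
    have hupper := monotone_quintic_sub_arsinh_sub_cubic ht
    simp only [arsinh_zero] at hlower hupper
    exact mem_uIcc_of_le (by linarith) (by linarith)
  · have hlower := monotone_arsinh_sub_cubic ht
    have hupper := monotone_quintic_sub_arsinh_sub_cubic ht
    simp only [arsinh_zero] at hlower hupper
    exact mem_uIcc_of_ge (by linarith) (by linarith)

theorem arsinh_cubic_taylor_bound_general (t : ℝ) :
    |Real.arsinh t - (t - t ^ 3 / 6)| ≤ (3 / 40) * |t| ^ 5 := by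
  simpa [abs_mul, abs_pow, abs_of_pos] using abs_sub_left_of_mem_uIcc (arsinh_sub_cubic_mem_uIcc t)

/-- For every real `t` with `|t| ≤ 1`, the cubic Taylor approximation of
the inverse hyperbolic sine satisfies `|arsinh(t) - (t - t³/6)| ≤ (3/40)·|t|⁵`. -/
theorem arsinh_cubic_taylor_bound (t : ℝ) (ht : |t| ≤ 1) :
    |Real.arsinh t - (t - t ^ 3 / 6)| ≤ (3 / 40) * |t| ^ 5 :=
  arsinh_cubic_taylor_bound_general t
end
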